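/- arXiv:2112.12165 — 2 statements merged into one kernel-verified Lean document; each statement's English description precedes it below -/
import Mathlib

section
/- If merge trees M and N are ε-interleaved, then they admit compatible presentations P_M, P_N with ‖L(P_M) − L(P_N)‖_∞ = ε. Combined with the converse direction, the ∞-presentation semi-distance equals the interleaving distance: d̂_I^∞(M,N) = d_I(M,N), and hence d_I^∞ = d_I. -/
open scoped ENNReal NNReal

/-- A persistent set: a functor `ℝ → Set`, with `ℝ` regarded as a poset category. -/
structure PersistentSet where
  obj : ℝ → Type
  map : ∀ {s t : ℝ}, s ≤ t → obj s → obj t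
  map_id : ∀ (t : ℝ) (x : obj t), map (le_refl t) x = x
  map_comp : ∀ {s t u : ℝ} (h1 : s ≤ t) (h2 : t ≤ u) (x : obj s),
    map h2 (map h1 x) = map (le_trans h1 h2) x

/-- An `ε`-interleaving between persistent sets `M` and `N`. -/
def Interleaved (M N : PersistentSet) (ε : ℝ) : Prop :=
  ∃ (hε : 0 ≤ ε) (φ : ∀ t, M.obj t → N.obj (t + ε)) (ψ : ∀ t, N.obj t → M.obj (t + ε)),
    (∀ (s t : ℝ) (h : s ≤ t) (x : M.obj s),
      φ t (M.map h x) = N.map (by linarith : s + ε ≤ t + ε) (φ s x)) ∧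
    (∀ (s t : ℝ) (h : s ≤ t) (x : N.obj s),
      ψ t (N.map h x) = M.map (by linarith : s + ε ≤ t + ε) (ψ s x)) ∧
    (∀ (s : ℝ) (x : M.obj s), ψ (s + ε) (φ s x) = M.map (by linarith : s ≤ s + ε + ε) x) ∧
    (∀ (s : ℝ) (x : N.obj s), φ (s + ε) (ψ s x) = N.map (by linarith : s ≤ s + ε + ε) x)

/-- A persistent set is constructible if it has a finite set of critical values:
it is empty before the first critical value, and the internal maps are
isomorphisms between consecutive critical values. -/
def Constructible (M : PersistentSet) : Prop :=
  ∃ τ : Finset ℝ,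
    (∀ t : ℝ, (∀ s ∈ τ, t < s) → IsEmpty (M.obj t)) ∧
    (∀ (s t : ℝ) (h : s ≤ t), (∀ c ∈ τ, c ≤ s ∨ t < c) → Function.Bijective (M.map h))

/-- A merge tree: a constructible persistent set with finite values which is
eventually a singleton. -/
structure MergeTree where
  toPS : PersistentSet
  constructible : Constructible toPS
  finite : ∀ t, Finite (toPS.obj t)
  eventually_one : ∃ T : ℝ, ∀ t, T ≤ t → (Nonempty (toPS.obj t) ∧ Subsingleton (toPS.obj t))

/-- Combinatorial data of a presentation: `k` generator strands with birth times `γ`,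
`l` relation strands with birth times `ρ`, and for each relation two merge maps
`f j`, `g j` into the generators (a map of strands `R_j → G_i` exists iff
`γ i ≤ ρ j`, which is the content of `hf`, `hg`). -/
structure Pres (k l : ℕ) where
  γ : Fin k → ℝ
  ρ : Fin l → ℝ
  f : Fin l → Fin k
  g : Fin l → Fin k
  hf : ∀ j, γ (f j) ≤ ρ j
  hg : ∀ j, γ (g j) ≤ ρ j

/-- The relation at time `t` identifying the two targets of each relation strand
born by time `t`. -/
def Pres.rel {k l : ℕ} (P : Pres k l) (t : ℝ) :
    {i : Fin k // P.γ i ≤ t} → {i : Fin k // P.γ i ≤ t} → Prop :=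
  fun a b => ∃ j : Fin l, P.ρ j ≤ t ∧
    ((P.f j = a.1 ∧ P.g j = b.1) ∨ (P.f j = b.1 ∧ P.g j = a.1))

/-- The persistent set presented by `P`: the pointwise coequalizer of the pair of maps
`⊔ⱼ Rⱼ ⇉ ⊔ᵢ Gᵢ` of disjoint unions of strands. -/
def Pres.toPS {k l : ℕ} (P : Pres k l) : PersistentSet where
  obj t := Quot (P.rel t)
  map := fun {s t} h =>
    Quot.lift (fun a => Quot.mk (P.rel t) ⟨a.1, le_trans a.2 h⟩)
      (fun a b hab => Quot.sound (by
        obtain ⟨j, hj, hc⟩ := hab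
        exact ⟨j, le_trans hj h, hc⟩))
  map_id := fun t x => Quot.inductionOn x fun a => rfl
  map_comp := fun h1 h2 x => Quot.inductionOn x fun a => rfl

/-- An isomorphism of persistent sets: a natural family of bijections. -/
structure PSIso (M N : PersistentSet) where
  hom : ∀ t, M.obj t → N.obj t
  natural : ∀ {s t : ℝ} (h : s ≤ t) (x : M.obj s), hom t (M.map h x) = N.map h (hom s x)
  bij : ∀ t, Function.Bijective (hom t)

/-- `P` is a presentation of the persistent set `M`. -/
def IsPresentation {k l : ℕ} (P : Pres k l) (M : PersistentSet) : Prop :=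
  Nonempty (PSIso P.toPS M)

/-- Two presentations are compatible if their underlying 0-1 presentation matrices agree:
entry `(i,j)` is 1 iff one of the two merge maps of relation `j` lands in generator `i`. -/
def Compatible {k l : ℕ} (P Q : Pres k l) : Prop :=
  ∀ (i : Fin k) (j : Fin l), (P.f j = i ∨ P.g j = i) ↔ (Q.f j = i ∨ Q.g j = i)

/-- The `ℓp`-norm of a finite vector of reals, `p ∈ [1,∞]`. -/
noncomputable def lpNorm (p : ℝ≥0∞) {n : ℕ} (x : Fin n → ℝ) : ℝ :=
  if p = ⊤ then ⨆ i, |x i| else (∑ i, |x i| ^ p.toReal) ^ (1 / p.toReal)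

/-- The difference of the label vectors of two compatible presentations: the vector of
differences of generator birth times followed by differences of relation birth times. -/
noncomputable def labelDiff {k l : ℕ} (P Q : Pres k l) : Fin (k + l) → ℝ :=
  Fin.append (fun i => P.γ i - Q.γ i) (fun j => P.ρ j - Q.ρ j)

/-- The `p`-presentation semi-distance between merge trees. -/
noncomputable def dHat (p : ℝ≥0∞) (M N : MergeTree) : ℝ :=
  sInf {c | ∃ (k l : ℕ) (P Q : Pres k l), Compatible P Q ∧
    IsPresentation P M.toPS ∧ IsPresentation Q N.toPS ∧
    c = lpNorm p (labelDiff P Q)}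

/-- The `p`-presentation distance: the path pseudometric induced by `dHat`. -/
noncomputable def dPres (p : ℝ≥0∞) (M N : MergeTree) : ℝ :=
  sInf {c | ∃ (n : ℕ) (Z : Fin (n + 1) → MergeTree), Z 0 = M ∧ Z (Fin.last n) = N ∧
    c = ∑ i : Fin n, dHat p (Z i.castSucc) (Z i.succ)}

/-- The interleaving distance on persistent sets, as a real number. -/
noncomputable def dIr (M N : PersistentSet) : ℝ :=
  sInf {ε : ℝ | Interleaved M N ε}

/-!
Every merge tree has a finite presentation: generators are the elements born at critical values,
relations record which of them are identified later. Given an `ε`-interleaving `φ, ψ` of `M`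
and `N` with presentations `PM`, `PN`, enlarge `PM` by the generators of `PN` delayed by `ε`,
each glued at birth to a generator of `PM` representing its image under `ψ`, and by the relations
of `PN` delayed by `ε`; enlarge `PN` symmetrically. Adding gluing relations of both kinds to both
sides (those of the other side hold by `ψ ∘ φ = shift by 2ε`) makes the two presentations
share one presentation matrix, and all their labels differ by exactly `ε`. Conversely, compatible
presentations whose labels differ by at most `δ` are `δ`-interleaved by shifting generators, so
the `ℓ∞`-label distances of compatible presentations are exactly the interleaving constants and
`d̂_I^∞ = d_I`. As `d_I` satisfies the triangle inequality, its path pseudometric is `d_I` again.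
-/

attribute [simp] PersistentSet.map_id PersistentSet.map_comp

namespace PSIso

variable {M N : PersistentSet}

noncomputable def inv (e : PSIso M N) (t : ℝ) : N.obj t → M.obj t :=
  (Equiv.ofBijective _ (e.bij t)).symm

@[simp]
lemma hom_inv (e : PSIso M N) (t : ℝ) (y : N.obj t) : e.hom t (e.inv t y) = y :=
  Equiv.ofBijective_apply_symm_apply _ _ _

@[simp]
lemma inv_hom (e : PSIso M N) (t : ℝ) (x : M.obj t) : e.inv t (e.hom t x) = x :=
  Equiv.ofBijective_symm_apply_apply _ _ _

lemma inv_natural (e : PSIso M N) {s t : ℝ} (h : s ≤ t) (y : N.obj s) :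
    e.inv t (N.map h y) = M.map h (e.inv s y) :=
  (e.bij t).1 (by rw [e.hom_inv, e.natural, e.hom_inv])

def trans {P : PersistentSet} (e : PSIso M N) (f : PSIso N P) : PSIso M P where
  hom t := f.hom t ∘ e.hom t
  natural h x := by simp [e.natural, f.natural]
  bij t := (f.bij t).comp (e.bij t)

end PSIso

namespace Interleaved

variable {M N P : PersistentSet} {ε δ : ℝ}

lemma nonneg (h : Interleaved M N ε) : 0 ≤ ε := h.fst

lemma refl (M : PersistentSet) : Interleaved M M 0 :=
  ⟨le_rfl, fun t => M.map (by simp), fun t => M.map (by simp), by simp, by simp, by simp, by simp⟩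

lemma congr {M' N' : PersistentSet} (eM : PSIso M M') (eN : PSIso N N')
    (h : Interleaved M N ε) : Interleaved M' N' ε := by
  obtain ⟨hε, φ, ψ, natφ, natψ, ψφ, φψ⟩ := h
  refine ⟨hε, fun t x => eN.hom _ (φ t (eM.inv t x)), fun t y => eM.hom _ (ψ t (eN.inv t y)),
    ?_, ?_, ?_, ?_⟩ <;> intros <;>
    simp only [eM.inv_natural, eN.inv_natural, natφ, natψ, eM.natural, eN.natural,
      PSIso.inv_hom, ψφ, φψ, PSIso.hom_inv]

lemma trans (h₁ : Interleaved M N ε) (h₂ : Interleaved N P δ) : Interleaved M P (ε + δ) := by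
  obtain ⟨hε, φ₁, ψ₁, natφ₁, natψ₁, ψφ₁, φψ₁⟩ := h₁
  obtain ⟨hδ, φ₂, ψ₂, natφ₂, natψ₂, ψφ₂, φψ₂⟩ := h₂
  refine ⟨add_nonneg hε hδ,
    fun t x => P.map (by linarith) (φ₂ (t + ε) (φ₁ t x)),
    fun t y => M.map (by linarith) (ψ₁ (t + δ) (ψ₂ t y)), ?_, ?_, ?_, ?_⟩ <;> intros <;>
    simp only [natφ₁, natφ₂, natψ₁, natψ₂, ψφ₁, ψφ₂, φψ₁, φψ₂, PersistentSet.map_comp]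

end Interleaved

lemma interleaved_of_subsingleton {M N : PersistentSet} {c T ε : ℝ} (hε : 0 ≤ ε)
    (hTε : T ≤ c + ε) (hM : ∀ t, Nonempty (M.obj t) → c ≤ t)
    (hN : ∀ t, Nonempty (N.obj t) → c ≤ t)
    (hMT : ∀ t, T ≤ t → Nonempty (M.obj t) ∧ Subsingleton (M.obj t))
    (hNT : ∀ t, T ≤ t → Nonempty (N.obj t) ∧ Subsingleton (N.obj t)) :
    Interleaved M N ε := by
  have late : ∀ {t s : ℝ}, c ≤ t → t + ε ≤ s → T ≤ s := fun hc hs => by linarith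
  refine ⟨hε, fun t x => Classical.choice (hNT _ (late (hM t ⟨x⟩) le_rfl)).1,
    fun t y => Classical.choice (hMT _ (late (hN t ⟨y⟩) le_rfl)).1, ?_, ?_, ?_, ?_⟩
  · intro s t h x
    exact (hNT _ (late (hM s ⟨x⟩) (by linarith))).2.elim _ _
  · intro s t h y
    exact (hMT _ (late (hN s ⟨y⟩) (by linarith))).2.elim _ _
  · intro s x
    exact (hMT _ (late (hM s ⟨x⟩) (by linarith))).2.elim _ _
  · intro s y
    exact (hNT _ (late (hN s ⟨y⟩) (by linarith))).2.elim _ _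

namespace MergeTree

lemma bddBelow_setOf_nonempty (M : MergeTree) : BddBelow {t | Nonempty (M.toPS.obj t)} := by
  obtain ⟨τ, hempty, -⟩ := M.constructible
  obtain ⟨T, hT⟩ := M.eventually_one
  have hτ : τ.Nonempty := by
    by_contra h
    exact (hempty T (by simp_all)).false (Classical.choice (hT T le_rfl).1)
  refine ⟨τ.min' hτ, fun t ht => not_lt.1 fun h => ?_⟩
  exact (hempty t fun s hs => h.trans_le (τ.min'_le s hs)).false (Classical.choice ht)

lemma exists_interleaved (M N : MergeTree) : ∃ ε, Interleaved M.toPS N.toPS ε := by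
  obtain ⟨cM, hcM⟩ := M.bddBelow_setOf_nonempty
  obtain ⟨cN, hcN⟩ := N.bddBelow_setOf_nonempty
  obtain ⟨TM, hTM⟩ := M.eventually_one
  obtain ⟨TN, hTN⟩ := N.eventually_one
  refine ⟨max 0 (max TM TN - min cM cN), interleaved_of_subsingleton (le_max_left _ _) ?_
    (fun _ ht => (min_le_left _ _).trans (hcM ht)) (fun _ ht => (min_le_right _ _).trans (hcN ht))
    (fun t ht => hTM t ((le_max_left _ _).trans ht))
    (fun t ht => hTN t ((le_max_right _ _).trans ht))⟩
  linarith [le_max_right 0 (max TM TN - min cM cN)]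

end MergeTree

lemma dIr_nonneg (M N : PersistentSet) : 0 ≤ dIr M N :=
  Real.sInf_nonneg fun _ h => Interleaved.nonneg h

lemma bddBelow_interleaved (M N : PersistentSet) : BddBelow {ε | Interleaved M N ε} :=
  ⟨0, fun _ h => Interleaved.nonneg h⟩

lemma dIr_self (M : PersistentSet) : dIr M M = 0 :=
  le_antisymm (csInf_le (bddBelow_interleaved M M) (Interleaved.refl M)) (dIr_nonneg M M)

lemma MergeTree.dIr_triangle (L M N : MergeTree) :
    dIr L.toPS N.toPS ≤ dIr L.toPS M.toPS + dIr M.toPS N.toPS := by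
  have hne : ∀ A B : MergeTree, {ε | Interleaved A.toPS B.toPS ε}.Nonempty :=
    fun A B => A.exists_interleaved B
  rw [dIr, dIr, dIr, ← csInf_add (hne L M) (bddBelow_interleaved _ _) (hne M N)
    (bddBelow_interleaved _ _)]
  refine csInf_le_csInf (bddBelow_interleaved _ _) ((hne L M).add (hne M N)) ?_
  rintro _ ⟨ε, hε, δ, hδ, rfl⟩
  exact hε.trans hδ

lemma le_sum_chain {α : Type*} (d : α → α → ℝ) (hself : ∀ a, d a a ≤ 0)
    (htri : ∀ a b c, d a c ≤ d a b + d b c) :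
    ∀ (n : ℕ) (Z : Fin (n + 1) → α),
      d (Z 0) (Z (Fin.last n)) ≤ ∑ i : Fin n, d (Z i.castSucc) (Z i.succ)
  | 0, Z => by simpa using hself (Z 0)
  | n + 1, Z => by
    have ih := le_sum_chain d hself htri n (fun i => Z i.castSucc)
    rw [Fin.sum_univ_castSucc]
    simp only [Fin.castSucc_zero, Fin.succ_last, ← Fin.succ_castSucc] at ih ⊢
    linarith [htri (Z 0) (Z (Fin.last n).castSucc) (Z (Fin.last (n + 1)))]

lemma sInf_sum_chain_eq {α : Type*} (d : α → α → ℝ) (hnonneg : ∀ a b, 0 ≤ d a b)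
    (hself : ∀ a, d a a ≤ 0) (htri : ∀ a b c, d a c ≤ d a b + d b c) (a b : α) :
    sInf {c | ∃ (n : ℕ) (Z : Fin (n + 1) → α), Z 0 = a ∧ Z (Fin.last n) = b ∧
      c = ∑ i : Fin n, d (Z i.castSucc) (Z i.succ)} = d a b := by
  have hmem : d a b ∈ {c | ∃ (n : ℕ) (Z : Fin (n + 1) → α), Z 0 = a ∧ Z (Fin.last n) = b ∧
      c = ∑ i : Fin n, d (Z i.castSucc) (Z i.succ)} := ⟨1, ![a, b], rfl, rfl, by simp⟩
  refine le_antisymm (csInf_le ⟨0, ?_⟩ hmem) (le_csInf ⟨_, hmem⟩ ?_)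
  · rintro _ ⟨n, Z, -, -, rfl⟩
    exact Finset.sum_nonneg fun i _ => hnonneg _ _
  · rintro _ ⟨n, Z, rfl, rfl, rfl⟩
    exact le_sum_chain d hself htri n Z

/-- `Pres` with generators and relations indexed by arbitrary types instead of `Fin k`, `Fin l`. -/
structure GPres (I J : Type) where
  γ : I → ℝ
  ρ : J → ℝ
  f : J → I
  g : J → I
  hf : ∀ j, γ (f j) ≤ ρ j
  hg : ∀ j, γ (g j) ≤ ρ j

namespace GPres

variable {I J I' J' : Type}

def rel (P : GPres I J) (t : ℝ) : {i : I // P.γ i ≤ t} → {i : I // P.γ i ≤ t} → Prop :=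
  fun a b => ∃ j, P.ρ j ≤ t ∧ ((P.f j = a.1 ∧ P.g j = b.1) ∨ (P.f j = b.1 ∧ P.g j = a.1))

def toPS (P : GPres I J) : PersistentSet where
  obj t := Quot (P.rel t)
  map h := Quot.map (fun a => ⟨a.1, a.2.trans h⟩) fun _ _ ⟨j, hj, hc⟩ => ⟨j, hj.trans h, hc⟩
  map_id _ x := Quot.inductionOn x fun _ => rfl
  map_comp _ _ x := Quot.inductionOn x fun _ => rfl

lemma map_eq_of_rel (P : GPres I J) {M : PersistentSet} (u : ∀ i, M.obj (P.γ i))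
    (hu : ∀ j, M.map (P.hf j) (u (P.f j)) = M.map (P.hg j) (u (P.g j))) {t : ℝ}
    {a b : {i // P.γ i ≤ t}} (hab : P.rel t a b) : M.map a.2 (u a.1) = M.map b.2 (u b.1) := by
  obtain ⟨a, ha⟩ := a
  obtain ⟨b, hb⟩ := b
  obtain ⟨j, hj, ⟨rfl, rfl⟩ | ⟨rfl, rfl⟩⟩ := hab
  · rw [← M.map_comp (P.hf j) hj, hu, M.map_comp]
  · rw [← M.map_comp (P.hg j) hj, ← hu, M.map_comp]

def toPres {k l : ℕ} (P : GPres I J) (eI : Fin k ≃ I) (eJ : Fin l ≃ J) : Pres k l where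
  γ := P.γ ∘ eI
  ρ := P.ρ ∘ eJ
  f j := eI.symm (P.f (eJ j))
  g j := eI.symm (P.g (eJ j))
  hf j := by simpa using P.hf (eJ j)
  hg j := by simpa using P.hg (eJ j)

def toPresIso {k l : ℕ} (P : GPres I J) (eI : Fin k ≃ I) (eJ : Fin l ≃ J) :
    PSIso (P.toPres eI eJ).toPS P.toPS where
  hom t := Quot.congr (ra := (P.toPres eI eJ).rel t) (rb := P.rel t)
    (eI.subtypeEquiv fun _ => Iff.rfl) fun _ _ => by
      simp only [Pres.rel, rel, toPres, Function.comp_apply, Equiv.symm_apply_eq]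
      exact eJ.exists_congr fun _ => Iff.rfl
  natural _ x := Quot.inductionOn x fun _ => rfl
  bij _ := Equiv.bijective _

/-- Generators `u` exhibiting `P` as a presentation of `M`; `inj` says that the induced map
`P.toPS.obj t → M.obj t` is injective. -/
structure Realization (P : GPres I J) (M : PersistentSet) where
  u : ∀ i, M.obj (P.γ i)
  sound : ∀ j, M.map (P.hf j) (u (P.f j)) = M.map (P.hg j) (u (P.g j))
  surj : ∀ (t : ℝ) (y : M.obj t), ∃ (i : I) (h : P.γ i ≤ t), M.map h (u i) = y
  inj : ∀ (t : ℝ) (a b : {i // P.γ i ≤ t}), M.map a.2 (u a.1) = M.map b.2 (u b.1) →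
    Quot.mk (P.rel t) a = Quot.mk (P.rel t) b

variable {P : GPres I J} {M : PersistentSet}

def Realization.psIso (R : P.Realization M) : PSIso P.toPS M where
  hom t := Quot.lift (fun a => M.map a.2 (R.u a.1)) fun _ _ => P.map_eq_of_rel R.u R.sound
  natural _ x := Quot.inductionOn x fun _ => (M.map_comp _ _ _).symm
  bij t := by
    refine ⟨fun x y => Quot.inductionOn x fun a => Quot.inductionOn y fun b => R.inj t a b,
      fun y => ?_⟩
    obtain ⟨i, h, rfl⟩ := R.surj t y
    exact ⟨Quot.mk _ ⟨i, h⟩, rfl⟩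

/-- A realization of `P` extends to a presentation `P'` containing `P` along `ι` as soon as the
new generators satisfy the relations of `P'` and each of them is glued, at its birth, to an old
one. -/
def Realization.extend (R : P.Realization M) (P' : GPres I' J') (u' : ∀ i, M.obj (P'.γ i))
    (sound' : ∀ j, M.map (P'.hf j) (u' (P'.f j)) = M.map (P'.hg j) (u' (P'.g j)))
    (ι : I → I') (hγ : ∀ i, P'.γ (ι i) = P.γ i) (hu : ∀ i, M.map (hγ i).le (u' (ι i)) = R.u i)
    (hrel : ∀ j, ∃ j', P'.ρ j' ≤ P.ρ j ∧ P'.f j' = ι (P.f j) ∧ P'.g j' = ι (P.g j))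
    (hglue : ∀ i', (∃ i, ι i = i') ∨
      ∃ j' i, P'.ρ j' ≤ P'.γ i' ∧ P'.f j' = i' ∧ P'.g j' = ι i) :
    P'.Realization M where
  u := u'
  sound := sound'
  surj t y := by
    obtain ⟨i, h, rfl⟩ := R.surj t y
    exact ⟨ι i, (hγ i).le.trans h, by rw [← hu, M.map_comp]⟩
  inj t a b hab := by
    let ιt : {i // P.γ i ≤ t} → {i' // P'.γ i' ≤ t} := fun q => ⟨ι q.1, (hγ q.1).le.trans q.2⟩
    have reduce : ∀ a : {i' // P'.γ i' ≤ t}, ∃ q : {i // P.γ i ≤ t},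
        Quot.mk (P'.rel t) a = Quot.mk _ (ιt q) ∧ M.map a.2 (u' a.1) = M.map q.2 (R.u q.1) := by
      have old : ∀ q : {i // P.γ i ≤ t}, M.map (ιt q).2 (u' (ι q.1)) = M.map q.2 (R.u q.1) :=
        fun q => by rw [← hu, M.map_comp]
      rintro ⟨i', hi'⟩
      obtain ⟨i, rfl⟩ | ⟨j', i, hj', hf', hg'⟩ := hglue i'
      · exact ⟨⟨i, (hγ i).ge.trans hi'⟩, rfl, old ⟨i, (hγ i).ge.trans hi'⟩⟩
      · have hi : P'.γ (ι i) ≤ t := (hg' ▸ P'.hg j').trans (hj'.trans hi')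
        have hrel' : P'.rel t ⟨i', hi'⟩ (ιt ⟨i, (hγ i).ge.trans hi⟩) :=
          ⟨j', hj'.trans hi', Or.inl ⟨hf', hg'⟩⟩
        exact ⟨_, Quot.sound hrel', (P'.map_eq_of_rel u' sound' hrel').trans (old _)⟩
    obtain ⟨qa, hqa, ha⟩ := reduce a
    obtain ⟨qb, hqb, hb⟩ := reduce b
    have hιt : ∀ x y, P.rel t x y → P'.rel t (ιt x) (ιt y) := by
      rintro x y ⟨j, hj, hc⟩
      obtain ⟨j', hj', hf', hg'⟩ := hrel j
      refine ⟨j', hj'.trans hj, ?_⟩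
      rw [hf', hg']
      exact hc.imp (And.imp (congrArg ι) (congrArg ι)) (And.imp (congrArg ι) (congrArg ι))
    rw [hqa, hqb]
    exact congrArg (Quot.map ιt hιt) (R.inj t qa qb (ha.symm.trans (hab.trans hb)))

lemma Realization.isPresentation {k l : ℕ} (R : P.Realization M) (eI : Fin k ≃ I)
    (eJ : Fin l ≃ J) : IsPresentation (P.toPres eI eJ) M :=
  ⟨(P.toPresIso eI eJ).trans R.psIso⟩

end GPres

def IsCriticalSet (M : PersistentSet) (τ : Finset ℝ) : Prop :=
  (∀ t : ℝ, (∀ s ∈ τ, t < s) → IsEmpty (M.obj t)) ∧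
    ∀ (s t : ℝ) (h : s ≤ t), (∀ c ∈ τ, c ≤ s ∨ t < c) → Function.Bijective (M.map h)

lemma IsCriticalSet.exists_greatest_le {M : PersistentSet} {τ : Finset ℝ} (hτ : IsCriticalSet M τ)
    {t : ℝ} (y : M.obj t) : ∃ c ∈ τ, ∃ h : c ≤ t,
      (∀ c' ∈ τ, c' ≤ t → c' ≤ c) ∧ Function.Bijective (M.map h) := by
  classical
  have hne : (τ.filter (· ≤ t)).Nonempty := by
    by_contra hS
    refine (hτ.1 t fun s hs => not_le.1 fun hst => hS ⟨s, ?_⟩).elim y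
    exact Finset.mem_filter.2 ⟨hs, hst⟩
  obtain ⟨hcτ, hct⟩ := Finset.mem_filter.1 ((τ.filter (· ≤ t)).max'_mem hne)
  have hlast : ∀ c' ∈ τ, c' ≤ t → c' ≤ (τ.filter (· ≤ t)).max' hne :=
    fun c' hc' hc't => (τ.filter (· ≤ t)).le_max' c' (Finset.mem_filter.2 ⟨hc', hc't⟩)
  refine ⟨_, hcτ, hct, hlast, hτ.2 _ t hct fun c' hc' => ?_⟩
  exact (le_or_gt c' t).imp (hlast c' hc') id

section Canonical

variable (M : PersistentSet) (τ : Finset ℝ)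

/-- One generator for each element at a critical value, one relation for each pair `(x, y)` of
such elements with `y` the image of `x`. -/
def canonicalPres : GPres ((c : τ) × M.obj c) {p : ((c : τ) × M.obj c) × ((c : τ) × M.obj c) //
    ∃ h : p.1.1.1 ≤ p.2.1.1, M.map h p.1.2 = p.2.2} where
  γ i := i.1
  ρ j := j.1.2.1
  f j := j.1.1
  g j := j.1.2
  hf j := j.2.fst
  hg _ := le_rfl

variable {M τ}

def IsCriticalSet.canonicalRealization (hτ : IsCriticalSet M τ) :
    (canonicalPres M τ).Realization M where
  u i := i.2
  sound j := j.2.snd.trans (M.map_id _ _).symm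
  surj t y := by
    obtain ⟨c, hcτ, hct, -, hbij⟩ := hτ.exists_greatest_le y
    obtain ⟨x, hx⟩ := hbij.2 y
    exact ⟨⟨⟨c, hcτ⟩, x⟩, hct, hx⟩
  inj t a b hab := by
    obtain ⟨c, hcτ, hct, hlast, hbij⟩ := hτ.exists_greatest_le (M.map a.2 a.1.2)
    -- every generator alive at `t` is identified with its image at the last critical value `c`
    let top : {i // (canonicalPres M τ).γ i ≤ t} → {i // (canonicalPres M τ).γ i ≤ t} :=
      fun p => ⟨⟨⟨c, hcτ⟩, M.map (hlast _ p.1.1.2 p.2) p.1.2⟩, hct⟩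
    have hrel : ∀ p, Quot.mk ((canonicalPres M τ).rel t) p = Quot.mk _ (top p) := fun p =>
      Quot.sound ⟨⟨(p.1, (top p).1), hlast _ p.1.1.2 p.2, rfl⟩, hct, Or.inl ⟨rfl, rfl⟩⟩
    have htop : top a = top b := by
      have hx : M.map (hlast _ a.1.1.2 a.2) a.1.2 = M.map (hlast _ b.1.1.2 b.2) b.1.2 :=
        hbij.1 (by simp only [M.map_comp]; exact hab)
      simp only [top, hx]
    rw [hrel a, hrel b, htop]

end Canonical

lemma MergeTree.exists_realization (M : MergeTree) :
    ∃ (I J : Type) (_ : Finite I) (_ : Finite J) (P : GPres I J),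
      Nonempty (P.Realization M.toPS) := by
  obtain ⟨τ, hτ⟩ := M.constructible
  have := M.finite
  exact ⟨_, _, inferInstance, inferInstance, _, ⟨IsCriticalSet.canonicalRealization hτ⟩⟩

namespace GPres

section Augment

variable {IM JM IN JN : Type} (PM : GPres IM JM) (PN : GPres IN JN) {ε : ℝ}
  (a : IN → IM) (b : IM → IN)

def augmentF : (JM ⊕ JN) ⊕ (IN ⊕ IM) → IM ⊕ IN :=
  Sum.elim (Sum.elim (Sum.inl ∘ PM.f) (Sum.inr ∘ PN.f)) (Sum.elim Sum.inr Sum.inl)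

def augmentG : (JM ⊕ JN) ⊕ (IN ⊕ IM) → IM ⊕ IN :=
  Sum.elim (Sum.elim (Sum.inl ∘ PM.g) (Sum.inr ∘ PN.g)) (Sum.elim (Sum.inl ∘ a) (Sum.inr ∘ b))

/-- The generator `i` of `PN` is glued to `a i` at time `γ i + ε`, and the generator `i` of `PM`
to `b i` at time `γ i + 2ε`. -/
def augmentLeft (hε : 0 ≤ ε) (ha : ∀ i, PM.γ (a i) ≤ PN.γ i + ε)
    (hb : ∀ i, PN.γ (b i) ≤ PM.γ i + ε) : GPres (IM ⊕ IN) ((JM ⊕ JN) ⊕ (IN ⊕ IM)) where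
  γ := Sum.elim PM.γ (PN.γ · + ε)
  ρ := Sum.elim (Sum.elim PM.ρ (PN.ρ · + ε)) (Sum.elim (PN.γ · + ε) (PM.γ · + ε + ε))
  f := augmentF PM PN
  g := augmentG PM PN a b
  hf := by
    rintro ((j | j) | (i | i))
    exacts [PM.hf j, add_le_add_left (PN.hf j) ε, le_rfl, by simp [augmentF]; linarith]
  hg := by
    rintro ((j | j) | (i | i))
    exacts [PM.hg j, add_le_add_left (PN.hg j) ε, ha i, add_le_add_left (hb i) ε]

def augmentRight (hε : 0 ≤ ε) (ha : ∀ i, PM.γ (a i) ≤ PN.γ i + ε)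
    (hb : ∀ i, PN.γ (b i) ≤ PM.γ i + ε) : GPres (IM ⊕ IN) ((JM ⊕ JN) ⊕ (IN ⊕ IM)) where
  γ := Sum.elim (PM.γ · + ε) PN.γ
  ρ := Sum.elim (Sum.elim (PM.ρ · + ε) PN.ρ) (Sum.elim (PN.γ · + ε + ε) (PM.γ · + ε))
  f := augmentF PM PN
  g := augmentG PM PN a b
  hf := by
    rintro ((j | j) | (i | i))
    exacts [add_le_add_left (PM.hf j) ε, PN.hf j, by simp [augmentF]; linarith, le_rfl]
  hg := by
    rintro ((j | j) | (i | i))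
    exacts [add_le_add_left (PM.hg j) ε, PN.hg j, add_le_add_left (ha i) ε, hb i]

variable {PM PN a b} {hε : 0 ≤ ε} {ha : ∀ i, PM.γ (a i) ≤ PN.γ i + ε}
  {hb : ∀ i, PN.γ (b i) ≤ PM.γ i + ε}

lemma abs_augment_γ_sub (i : IM ⊕ IN) :
    |(augmentLeft PM PN a b hε ha hb).γ i - (augmentRight PM PN a b hε ha hb).γ i| = ε := by
  rcases i with i | i <;> simp [augmentLeft, augmentRight, abs_of_nonneg hε]

lemma abs_augment_ρ_sub (j : (JM ⊕ JN) ⊕ (IN ⊕ IM)) :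
    |(augmentLeft PM PN a b hε ha hb).ρ j - (augmentRight PM PN a b hε ha hb).ρ j| = ε := by
  rcases j with (j | j) | (i | i) <;> simp [augmentLeft, augmentRight, abs_of_nonneg hε]

variable {M N : PersistentSet} {φ : ∀ t, M.obj t → N.obj (t + ε)}
  {ψ : ∀ t, N.obj t → M.obj (t + ε)}

def Realization.augmentLeft (RM : PM.Realization M) (RN : PN.Realization N)
    (natψ : ∀ (s t : ℝ) (h : s ≤ t) (y : N.obj s),
      ψ t (N.map h y) = M.map (by linarith : s + ε ≤ t + ε) (ψ s y))
    (ψφ : ∀ (s : ℝ) (x : M.obj s), ψ (s + ε) (φ s x) = M.map (by linarith : s ≤ s + ε + ε) x)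
    (hua : ∀ i, M.map (ha i) (RM.u (a i)) = ψ _ (RN.u i))
    (hub : ∀ i, N.map (hb i) (RN.u (b i)) = φ _ (RM.u i)) :
    (augmentLeft PM PN a b hε ha hb).Realization M :=
  RM.extend _ (Sum.rec RM.u fun i => ψ _ (RN.u i))
    (by
      rintro ((j | j) | (i | i))
      · exact RM.sound j
      · exact (natψ _ _ _ _).symm.trans ((congrArg _ (RN.sound j)).trans (natψ _ _ _ _))
      · exact (M.map_id _ _).trans (hua i).symm
      · exact (ψφ _ _).symm.trans ((congrArg _ (hub i).symm).trans (natψ _ _ _ _)))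
    Sum.inl (fun _ => rfl) (fun _ => M.map_id _ _) (fun j => ⟨.inl (.inl j), le_rfl, rfl, rfl⟩)
    (by
      rintro (i | i)
      exacts [.inl ⟨i, rfl⟩, .inr ⟨.inr (.inl i), a i, le_rfl, rfl, rfl⟩])

def Realization.augmentRight (RM : PM.Realization M) (RN : PN.Realization N)
    (natφ : ∀ (s t : ℝ) (h : s ≤ t) (x : M.obj s),
      φ t (M.map h x) = N.map (by linarith : s + ε ≤ t + ε) (φ s x))
    (φψ : ∀ (s : ℝ) (y : N.obj s), φ (s + ε) (ψ s y) = N.map (by linarith : s ≤ s + ε + ε) y)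
    (hua : ∀ i, M.map (ha i) (RM.u (a i)) = ψ _ (RN.u i))
    (hub : ∀ i, N.map (hb i) (RN.u (b i)) = φ _ (RM.u i)) :
    (augmentRight PM PN a b hε ha hb).Realization N :=
  RN.extend _ (Sum.rec (fun i => φ _ (RM.u i)) RN.u)
    (by
      rintro ((j | j) | (i | i))
      · exact (natφ _ _ _ _).symm.trans ((congrArg _ (RM.sound j)).trans (natφ _ _ _ _))
      · exact RN.sound j
      · exact (φψ _ _).symm.trans ((congrArg _ (hua i).symm).trans (natφ _ _ _ _))
      · exact (N.map_id _ _).trans (hub i).symm)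
    Sum.inr (fun _ => rfl) (fun _ => N.map_id _ _) (fun j => ⟨.inl (.inr j), le_rfl, rfl, rfl⟩)
    (by
      rintro (i | i)
      exacts [.inr ⟨.inr (.inr i), b i, le_rfl, rfl, rfl⟩, .inl ⟨i, rfl⟩])

end Augment

end GPres

lemma GPres.abs_labelDiff_toPres {I J : Type} {k l : ℕ} {P Q : GPres I J} (eI : Fin k ≃ I)
    (eJ : Fin l ≃ J) {ε : ℝ} (hγ : ∀ i, |P.γ i - Q.γ i| = ε) (hρ : ∀ j, |P.ρ j - Q.ρ j| = ε)
    (m : Fin (k + l)) : |labelDiff (P.toPres eI eJ) (Q.toPres eI eJ) m| = ε :=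
  Fin.addCases (fun i => by simpa [labelDiff, GPres.toPres] using hγ (eI i))
    (fun j => by simpa [labelDiff, GPres.toPres] using hρ (eJ j)) m

lemma IsPresentation.pos {k l : ℕ} {P : Pres k l} {M : PersistentSet} (h : IsPresentation P M)
    {t : ℝ} (y : M.obj t) : 0 < k := by
  obtain ⟨x, -⟩ := (h.some.bij t).2 y
  exact Quot.inductionOn x fun a => a.1.pos

lemma MergeTree.pos_of_isPresentation {k l : ℕ} {P : Pres k l} (M : MergeTree)
    (h : IsPresentation P M.toPS) : 0 < k :=
  have ⟨T, hT⟩ := M.eventually_one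
  h.pos (Classical.choice (hT T le_rfl).1)

lemma abs_le_lpNorm_top {n : ℕ} (x : Fin n → ℝ) (i : Fin n) : |x i| ≤ lpNorm ⊤ x := by
  rw [lpNorm, if_pos rfl]
  exact le_ciSup (f := fun i => |x i|) (Set.finite_range _).bddAbove i

lemma lpNorm_top_eq_of_abs_eq {n : ℕ} (hn : 0 < n) {x : Fin n → ℝ} {ε : ℝ}
    (hx : ∀ i, |x i| = ε) : lpNorm ⊤ x = ε := by
  have : Nonempty (Fin n) := ⟨⟨0, hn⟩⟩
  simp [lpNorm, hx]

lemma MergeTree.exists_compatible_lpNorm_eq (M N : MergeTree) {ε : ℝ}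
    (h : Interleaved M.toPS N.toPS ε) : ∃ (k l : ℕ) (P Q : Pres k l), Compatible P Q ∧
      IsPresentation P M.toPS ∧ IsPresentation Q N.toPS ∧ lpNorm ⊤ (labelDiff P Q) = ε := by
  obtain ⟨IM, JM, _, _, PM, ⟨RM⟩⟩ := M.exists_realization
  obtain ⟨IN, JN, _, _, PN, ⟨RN⟩⟩ := N.exists_realization
  obtain ⟨hε, φ, ψ, natφ, natψ, ψφ, φψ⟩ := h
  choose a ha hua using fun i => RM.surj (PN.γ i + ε) (ψ _ (RN.u i))
  choose b hb hub using fun i => RN.surj (PM.γ i + ε) (φ _ (RM.u i))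
  obtain ⟨k, ⟨eI⟩⟩ := Finite.exists_equiv_fin (IM ⊕ IN)
  obtain ⟨l, ⟨eJ⟩⟩ := Finite.exists_equiv_fin ((JM ⊕ JN) ⊕ (IN ⊕ IM))
  have hP := (RM.augmentLeft RN natψ ψφ hua hub (hε := hε)).isPresentation eI.symm eJ.symm
  have hQ := (RM.augmentRight RN natφ φψ hua hub (hε := hε)).isPresentation eI.symm eJ.symm
  refine ⟨k, l, _, _, fun _ _ => ?_, hP, hQ, lpNorm_top_eq_of_abs_eq
    (Nat.add_pos_left (M.pos_of_isPresentation hP) l)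
    (GPres.abs_labelDiff_toPres _ _ GPres.abs_augment_γ_sub GPres.abs_augment_ρ_sub)⟩
  exact Iff.rfl

lemma Compatible.symm {k l : ℕ} {P Q : Pres k l} (h : Compatible P Q) : Compatible Q P :=
  fun i j => (h i j).symm

lemma Compatible.sym2_eq {k l : ℕ} {P Q : Pres k l} (h : Compatible P Q) (j : Fin l) :
    s(P.f j, P.g j) = s(Q.f j, Q.g j) :=
  Sym2.ext fun i => by simpa [eq_comm] using h i j

def Compatible.shift {k l : ℕ} {P Q : Pres k l} (hC : Compatible P Q) {δ : ℝ}
    (hγ : ∀ i, Q.γ i ≤ P.γ i + δ) (hρ : ∀ j, Q.ρ j ≤ P.ρ j + δ) (t : ℝ) :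
    P.toPS.obj t → Q.toPS.obj (t + δ) :=
  Quot.map (fun a => ⟨a.1, (hγ a.1).trans (by linarith [a.2])⟩) fun _ _ ⟨j, hj, hc⟩ =>
    ⟨j, (hρ j).trans (by linarith), by rw [← Sym2.eq_iff, ← hC.sym2_eq]; exact Sym2.eq_iff.2 hc⟩

lemma Compatible.interleaved {k l : ℕ} {P Q : Pres k l} (hC : Compatible P Q) {δ : ℝ}
    (hδ : 0 ≤ δ) (hγ : ∀ i, |P.γ i - Q.γ i| ≤ δ) (hρ : ∀ j, |P.ρ j - Q.ρ j| ≤ δ) :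
    Interleaved P.toPS Q.toPS δ :=
  ⟨hδ,
    hC.shift (fun i => by linarith [(abs_le.1 (hγ i)).1])
      (fun j => by linarith [(abs_le.1 (hρ j)).1]),
    hC.symm.shift (fun i => by linarith [(abs_le.1 (hγ i)).2])
      (fun j => by linarith [(abs_le.1 (hρ j)).2]),
    fun _ _ _ x => Quot.inductionOn x fun _ => rfl,
    fun _ _ _ x => Quot.inductionOn x fun _ => rfl,
    fun _ x => Quot.inductionOn x fun _ => rfl,
    fun _ x => Quot.inductionOn x fun _ => rfl⟩

lemma MergeTree.interleaved_of_compatible (M N : MergeTree) {k l : ℕ} {P Q : Pres k l}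
    (hC : Compatible P Q) (hP : IsPresentation P M.toPS) (hQ : IsPresentation Q N.toPS) :
    Interleaved M.toPS N.toPS (lpNorm ⊤ (labelDiff P Q)) := by
  have hle := abs_le_lpNorm_top (labelDiff P Q)
  refine (hC.interleaved ?_ (fun i => ?_) (fun j => ?_)).congr hP.some hQ.some
  · exact (abs_nonneg _).trans (hle ⟨0, Nat.add_pos_left (M.pos_of_isPresentation hP) l⟩)
  · simpa [labelDiff] using hle (Fin.castAdd l i)
  · simpa [labelDiff] using hle (Fin.natAdd k j)

lemma MergeTree.dHat_top_eq_dIr (M N : MergeTree) : dHat ⊤ M N = dIr M.toPS N.toPS := by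
  refine congrArg sInf (Set.ext fun c => ⟨?_, fun h => ?_⟩)
  · rintro ⟨k, l, P, Q, hC, hP, hQ, rfl⟩
    exact M.interleaved_of_compatible N hC hP hQ
  · obtain ⟨k, l, P, Q, hC, hP, hQ, hPQ⟩ := M.exists_compatible_lpNorm_eq N h
    exact ⟨k, l, P, Q, hC, hP, hQ, hPQ.symm⟩

lemma MergeTree.dPres_top_eq_dIr (M N : MergeTree) : dPres ⊤ M N = dIr M.toPS N.toPS := by
  simp only [dPres, dHat_top_eq_dIr]
  exact sInf_sum_chain_eq (fun A B : MergeTree => dIr A.toPS B.toPS)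
    (fun _ _ => dIr_nonneg _ _) (fun A => (dIr_self A.toPS).le) dIr_triangle M N

/-- if merge trees `M`, `N` are `ε`-interleaved, then they admit compatible
presentations whose label vectors are at `ℓ∞`-distance `ε`; consequently the
`∞`-presentation semi-distance equals the interleaving distance, and `d_I^∞ = d_I`. -/
theorem infty_presentation_eq_interleaving :
    (∀ (M N : MergeTree) (ε : ℝ), Interleaved M.toPS N.toPS ε →
      ∃ (k l : ℕ) (P Q : Pres k l), Compatible P Q ∧
        IsPresentation P M.toPS ∧ IsPresentation Q N.toPS ∧
        lpNorm ⊤ (labelDiff P Q) = ε) ∧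
    (∀ M N : MergeTree,
      dHat ⊤ M N = dIr M.toPS N.toPS ∧ dPres ⊤ M N = dIr M.toPS N.toPS) :=
  ⟨fun M N _ h => M.exists_compatible_lpNorm_eq N h,
    fun M N => ⟨M.dHat_top_eq_dIr N, M.dPres_top_eq_dIr N⟩⟩
end

section
/- Instability of the p-cophenetic distance: let X be the path graph with three vertices a, b, c and two edges, let f ≡ 0 and let g be 0 on vertices and 1 on edges. Then for all p ∈ [1,∞), the p-cophenetic distance between the merge trees M = π₀S↑f and N = π₀S↑g equals 3^{1/p}, which exceeds ‖f − g‖_p = 2^{1/p}. Hence the p-cophenetic distance is not p-stable for p < ∞. -/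
open scoped ENNReal NNReal

/-- A point `a ∈ M(t)` is a leaf point if it is not in the image of any earlier map. -/
def IsLeafPt (M : PersistentSet) {t : ℝ} (a : M.obj t) : Prop :=
  ∀ (s : ℝ) (h : s ≤ t), s < t → a ∉ Set.range (M.map h)

/-- The merge height of two points of a persistent set: the infimum of the times at
which their images agree (the height of the least common ancestor). -/
noncomputable def mergeHt (M : PersistentSet) {s t : ℝ} (a : M.obj s) (b : M.obj t) : ℝ :=
  sInf {u : ℝ | ∃ (h1 : s ≤ u) (h2 : t ≤ u), M.map h1 a = M.map h2 b}

/-- A surjective ordered leaf labeling of a persistent set by `Fin m`. -/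
structure LeafLabeling (M : PersistentSet) (m : ℕ) where
  time : Fin m → ℝ
  pt : ∀ i, M.obj (time i)
  leaf : ∀ i, IsLeafPt M (pt i)
  surj : ∀ (t : ℝ) (a : M.obj t), IsLeafPt M a → ∃ i, time i = t ∧ HEq (pt i) a

/-- The labeled `p`-cophenetic distance (for finite `p`): the `ℓp`-distance between the
upper-triangular cophenetic vectors of merge heights. -/
noncomputable def cophCost (p : ℝ≥0∞) {m : ℕ} {M N : PersistentSet}
    (lM : LeafLabeling M m) (lN : LeafLabeling N m) : ℝ :=
  (∑ i : Fin m, ∑ j : Fin m, if i ≤ j then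
      |mergeHt M (lM.pt i) (lM.pt j) - mergeHt N (lN.pt i) (lN.pt j)| ^ p.toReal
    else 0) ^ (1 / p.toReal)

/-- The `p`-cophenetic distance between merge trees: the infimum of the labeled
`p`-cophenetic distance over all surjective ordered leaf labelings. -/
noncomputable def dCoph (p : ℝ≥0∞) (M N : MergeTree) : ℝ :=
  sInf {c | ∃ (m : ℕ) (lM : LeafLabeling M.toPS m) (lN : LeafLabeling N.toPS m),
    c = cophCost p lM lN}

/-- The path graph `X` on three vertices `a, b, c` with the function `f ≡ 0`:
three generators born at `0`, two relations born at `0`. -/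
noncomputable def presF : Pres 3 2 where
  γ := fun _ => 0
  ρ := fun _ => 0
  f := ![0, 1]
  g := ![1, 2]
  hf := fun _ => le_refl 0
  hg := fun _ => le_refl 0

/-- The path graph `X` with the function `g` which is `0` on vertices and `1` on edges:
three generators born at `0`, two relations born at `1`. -/
noncomputable def presG : Pres 3 2 where
  γ := fun _ => 0
  ρ := fun _ => 1
  f := ![0, 1]
  g := ![1, 2]
  hf := fun _ => zero_le_one
  hg := fun _ => zero_le_one

/-!
All leaves of `M` and `N` are born at time `0`. `M` is a single point from time `0` on, so its
cophenetic vectors vanish; the leaves of `N` are the three vertex strands, which stay apart until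
the edges are born at time `1` and are identified from then on. So the two cophenetic vectors
differ, by exactly `1`, at the pairs `i ≤ j` whose labels name different strands of `N`. As the
labeling of `N` is onto its three strands there are at least three such pairs, and a bijective
labeling by three labels has exactly three; hence `d_C^p(M, N) = 3^(1/p)`. Meanwhile `f - g` is
`-1` on the two edges and `0` on the vertices.
-/

open Finset

namespace PSIso

variable {A B : PersistentSet} (e : PSIso A B)

noncomputable def symm : PSIso B A where
  hom t := (Equiv.ofBijective _ (e.bij t)).symm
  natural {s t} h y := by
    apply (e.bij t).1
    simp only [Equiv.ofBijective_apply_symm_apply, e.natural]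
  bij t := (Equiv.ofBijective _ (e.bij t)).symm.bijective

@[simp]
lemma hom_symm_hom {t : ℝ} (b : B.obj t) : e.hom t (e.symm.hom t b) = b :=
  Equiv.ofBijective_apply_symm_apply _ (e.bij t) b

lemma isLeafPt_hom {t : ℝ} {a : A.obj t} (ha : IsLeafPt A a) : IsLeafPt B (e.hom t a) := by
  rintro s hst hlt ⟨y, hy⟩
  refine ha s hst hlt ⟨e.symm.hom s y, (e.bij t).1 ?_⟩
  rw [e.natural, hom_symm_hom, hy]

lemma mergeHt_hom {s t : ℝ} (a : A.obj s) (b : A.obj t) :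
    mergeHt B (e.hom s a) (e.hom t b) = mergeHt A a b := by
  simp only [mergeHt, ← e.natural, (e.bij _).1.eq_iff]

end PSIso

namespace LeafLabeling

variable {A B : PersistentSet} {m : ℕ}

noncomputable def map (e : PSIso A B) (l : LeafLabeling A m) : LeafLabeling B m where
  time := l.time
  pt i := e.hom _ (l.pt i)
  leaf i := e.isLeafPt_hom (l.leaf i)
  surj t b hb := by
    obtain ⟨i, rfl, hi⟩ := l.surj t _ (e.symm.isLeafPt_hom hb)
    exact ⟨i, rfl, heq_of_eq (by rw [eq_of_heq hi, e.hom_symm_hom])⟩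

lemma cophCost_map {A' B' : PersistentSet} (p : ℝ≥0∞) (e : PSIso A B) (e' : PSIso A' B')
    (l : LeafLabeling A m) (l' : LeafLabeling A' m) :
    cophCost p (l.map e) (l'.map e') = cophCost p l l' := by
  simp only [cophCost, map, PSIso.mergeHt_hom]

end LeafLabeling

lemma mergeHt_congr_heq {M : PersistentSet} {s s' t t' : ℝ} {a : M.obj s} {a' : M.obj s'}
    {b : M.obj t} {b' : M.obj t'} (hs : s = s') (ht : t = t') (ha : HEq a a') (hb : HEq b b') :
    mergeHt M a b = mergeHt M a' b' := by
  subst hs ht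
  rw [eq_of_heq ha, eq_of_heq hb]

lemma mergeHt_eq_of_map_eq {M : PersistentSet} {t u : ℝ} {a b : M.obj t} (htu : t ≤ u)
    (hu : M.map htu a = M.map htu b)
    (hlt : ∀ v (htv : t ≤ v), v < u → M.map htv a ≠ M.map htv b) :
    mergeHt M a b = u := by
  refine IsLeast.csInf_eq ⟨⟨htu, htu, hu⟩, ?_⟩
  rintro v ⟨htv, _, hv⟩
  exact not_lt.1 fun hvu => hlt v htv hvu hv

namespace Pres

section

variable {k l : ℕ} (P : Pres k l) {c : ℝ}

lemma mk_injective {t : ℝ} (ht : ∀ j, t < P.ρ j) : Function.Injective (Quot.mk (P.rel t)) :=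
  fun _ _ h => congrArg (Quot.lift id fun _ _ ⟨j, hj, _⟩ => absurd hj (not_le.2 (ht j))) h

lemma isLeafPt_of_forall_eq (hγ : ∀ i, P.γ i = c) (a : P.toPS.obj c) : IsLeafPt P.toPS a := by
  rintro s - hsc ⟨y, -⟩
  obtain ⟨⟨i, hi⟩, rfl⟩ := Quot.exists_rep y
  exact absurd (hγ i ▸ hi) (not_le.2 hsc)

lemma eq_and_exists_mk_of_isLeafPt (hγ : ∀ i, P.γ i = c) {t : ℝ} {a : P.toPS.obj t}
    (ha : IsLeafPt P.toPS a) : t = c ∧ ∃ i, HEq a (Quot.mk (P.rel c) ⟨i, (hγ i).le⟩) := by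
  obtain ⟨⟨i, hi⟩, rfl⟩ := Quot.exists_rep a
  have hct : c ≤ t := hγ i ▸ hi
  obtain rfl : t = c := (eq_or_lt_of_le hct).elim Eq.symm fun hlt =>
    (ha c hct hlt ⟨Quot.mk _ ⟨i, (hγ i).le⟩, rfl⟩).elim
  exact ⟨rfl, i, HEq.rfl⟩

def leafLabeling (hγ : ∀ i, P.γ i = c) : LeafLabeling P.toPS k where
  time _ := c
  pt i := Quot.mk _ ⟨i, (hγ i).le⟩
  leaf _ := P.isLeafPt_of_forall_eq hγ _
  surj _ _ ha := by
    obtain ⟨rfl, i, hi⟩ := P.eq_and_exists_mk_of_isLeafPt hγ ha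
    exact ⟨i, rfl, hi.symm⟩

end

section Path

variable {c r : ℝ} (P : Pres 3 2)

lemma subsingleton_obj_of_path (hf : P.f = ![0, 1]) (hg : P.g = ![1, 2]) {t : ℝ}
    (ht : ∀ j, P.ρ j ≤ t) : Subsingleton (P.toPS.obj t) := by
  have h1 : P.γ 1 ≤ t := le_trans (by simpa [hf] using P.hf 1) (ht 1)
  have key : ∀ x, Quot.mk (P.rel t) x = Quot.mk _ ⟨1, h1⟩ := by
    rintro ⟨i, hi⟩
    fin_cases i
    · exact Quot.sound ⟨0, ht 0, Or.inl ⟨by simp [hf], by simp [hg]⟩⟩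
    · rfl
    · exact Quot.sound ⟨1, ht 1, Or.inr ⟨by simp [hf], by simp [hg]⟩⟩
  refine ⟨fun a b => ?_⟩
  obtain ⟨x, rfl⟩ := Quot.exists_rep a
  obtain ⟨y, rfl⟩ := Quot.exists_rep b
  exact (key x).trans (key y).symm

lemma mergeHt_mk_of_path (hγ : ∀ i, P.γ i = c) (hρ : ∀ j, P.ρ j = r) (hf : P.f = ![0, 1])
    (hg : P.g = ![1, 2]) (i j : Fin 3) :
    mergeHt P.toPS (Quot.mk (P.rel c) ⟨i, (hγ i).le⟩) (Quot.mk (P.rel c) ⟨j, (hγ j).le⟩) =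
      if i = j then c else r := by
  split_ifs with hij
  · subst hij
    exact mergeHt_eq_of_map_eq le_rfl rfl fun v hcv hvc => absurd hcv (not_le.2 hvc)
  · have hcr : c ≤ r := hγ (P.f 0) ▸ hρ 0 ▸ P.hf 0
    have := P.subsingleton_obj_of_path hf hg fun j => (hρ j).le
    refine mergeHt_eq_of_map_eq hcr (Subsingleton.elim _ _) fun v _ hvr h => hij ?_
    exact congrArg Subtype.val (P.mk_injective (fun j => (hρ j).symm ▸ hvr) h)

lemma exists_mergeHt_eq_of_path (hγ : ∀ i, P.γ i = c) (hρ : ∀ j, P.ρ j = r)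
    (hf : P.f = ![0, 1]) (hg : P.g = ![1, 2]) {m : ℕ} (l : LeafLabeling P.toPS m) :
    ∃ lab : Fin m → Fin 3, (c < r → Function.Surjective lab) ∧
      ∀ i j, mergeHt P.toPS (l.pt i) (l.pt j) = if lab i = lab j then c else r := by
  choose htime lab hlab using fun i => P.eq_and_exists_mk_of_isLeafPt hγ (l.leaf i)
  refine ⟨lab, fun hcr k => ?_, fun i j => ?_⟩
  · obtain ⟨i, -, hik⟩ :=
      l.surj c _ (P.isLeafPt_of_forall_eq hγ (Quot.mk _ ⟨k, (hγ k).le⟩))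
    have hmk := eq_of_heq ((hlab i).symm.trans hik)
    exact ⟨i, congrArg Subtype.val (P.mk_injective (fun j => (hρ j).symm ▸ hcr) hmk)⟩
  · rw [mergeHt_congr_heq (htime i) (htime j) (hlab i) (hlab j),
      P.mergeHt_mk_of_path hγ hρ hf hg]

end Path

end Pres

lemma card_filter_lt_le_card_filter_ne_of_surjective {ι α : Type*} [Fintype ι] [LinearOrder ι]
    [Fintype α] [LinearOrder α] {lab : ι → α} (h : Function.Surjective lab) :
    #{q : α × α | q.1 < q.2} ≤ #{q : ι × ι | q.1 ≤ q.2 ∧ lab q.1 ≠ lab q.2} := by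
  refine card_le_card_of_surjOn
    (fun q => (min (lab q.1) (lab q.2), max (lab q.1) (lab q.2))) ?_
  rintro ⟨a, b⟩ hab
  simp only [coe_filter, mem_univ, true_and, Set.mem_ofPred_eq] at hab
  obtain ⟨i, rfl⟩ := h a
  obtain ⟨j, rfl⟩ := h b
  rcases le_total i j with hij | hji
  · exact ⟨(i, j), by simp [hij, hab.ne], by simp [hab.le]⟩
  · exact ⟨(j, i), by simp [hji, hab.ne'], by simp [hab.le]⟩

lemma cophCost_presF_presG {p : ℝ≥0∞} (hp : p.toReal ≠ 0) {m : ℕ}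
    (lF : LeafLabeling presF.toPS m) (lG : LeafLabeling presG.toPS m) :
    ∃ lab : Fin m → Fin 3, Function.Surjective lab ∧
      cophCost p lF lG =
        (#{q : Fin m × Fin m | q.1 ≤ q.2 ∧ lab q.1 ≠ lab q.2} : ℝ) ^ (1 / p.toReal) := by
  obtain ⟨_, -, hF⟩ := presF.exists_mergeHt_eq_of_path (c := 0) (r := 0) (fun _ => rfl)
    (fun _ => rfl) rfl rfl lF
  obtain ⟨lab, hlab, hG⟩ := presG.exists_mergeHt_eq_of_path (c := 0) (r := 1) (fun _ => rfl)
    (fun _ => rfl) rfl rfl lG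
  refine ⟨lab, hlab one_pos, ?_⟩
  rw [cophCost, card_filter, ← univ_product_univ, sum_product]
  push_cast
  congr 1
  refine sum_congr rfl fun i _ => sum_congr rfl fun j _ => ?_
  by_cases hij : i ≤ j <;> by_cases hl : lab i = lab j <;> simp [hF, hG, hij, hl, hp]

lemma lpNorm_labelDiff_presF_presG {p : ℝ≥0∞} (hp : p ≠ ⊤) (hp0 : p.toReal ≠ 0) :
    lpNorm p (labelDiff presF presG) = 2 ^ (1 / p.toReal) := by
  rw [lpNorm, if_neg hp, Fin.sum_univ_add]
  simp [labelDiff, presF, presG, hp0]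

/-- instability of the `p`-cophenetic distance.  For the merge trees
`M = π₀S↑f` and `N = π₀S↑g` of the cellular functions `f ≡ 0` and `g` (0 on vertices,
1 on edges) on the path graph with three vertices, and any `p ∈ [1,∞)`, the
`p`-cophenetic distance equals `3^(1/p)`, which exceeds `‖f - g‖_p = 2^(1/p)`.
Hence the `p`-cophenetic distance is not `p`-stable for `p < ∞`. -/
theorem cophenetic_instability (p : ℝ≥0∞) (hp : 1 ≤ p) (hp' : p ≠ ⊤)
    (M N : MergeTree)
    (hM : IsPresentation presF M.toPS) (hN : IsPresentation presG N.toPS) :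
    dCoph p M N = (3 : ℝ) ^ (1 / p.toReal) ∧
    lpNorm p (labelDiff presF presG) = (2 : ℝ) ^ (1 / p.toReal) ∧
    dCoph p M N > lpNorm p (labelDiff presF presG) := by
  obtain ⟨eM⟩ := hM
  obtain ⟨eN⟩ := hN
  have hp1 : 1 ≤ p.toReal := by simpa using ENNReal.toReal_mono hp' hp
  have hp0 : p.toReal ≠ 0 := by positivity
  have three_le_cost {m : ℕ} (lM : LeafLabeling M.toPS m) (lN : LeafLabeling N.toPS m) :
      (3 : ℝ) ^ (1 / p.toReal) ≤ cophCost p lM lN := by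
    rw [← LeafLabeling.cophCost_map p eM.symm eN.symm]
    obtain ⟨lab, hlab, hcost⟩ := cophCost_presF_presG hp0 (lM.map eM.symm) (lN.map eN.symm)
    rw [hcost]
    gcongr
    exact_mod_cast card_filter_lt_le_card_filter_ne_of_surjective (α := Fin 3) hlab
  have cost_eq_three : cophCost p ((presF.leafLabeling fun _ => rfl).map eM)
      ((presG.leafLabeling fun _ => rfl).map eN) = (3 : ℝ) ^ (1 / p.toReal) := by
    rw [LeafLabeling.cophCost_map]
    obtain ⟨lab, hlab, hcost⟩ := cophCost_presF_presG hp0 (presF.leafLabeling fun _ => rfl)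
      (presG.leafLabeling fun _ => rfl)
    simp only [hcost, (Finite.injective_iff_surjective.2 hlab).ne_iff]
    norm_num [show #{q : Fin 3 × Fin 3 | q.1 ≤ q.2 ∧ q.1 ≠ q.2} = 3 by decide]
  have hd : dCoph p M N = (3 : ℝ) ^ (1 / p.toReal) :=
    IsLeast.csInf_eq ⟨⟨3, _, _, cost_eq_three.symm⟩, by
      rintro _ ⟨m, lM, lN, rfl⟩
      exact three_le_cost lM lN⟩
  have hl := lpNorm_labelDiff_presF_presG hp' hp0
  refine ⟨hd, hl, ?_⟩
  rw [hd, hl]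
  exact Real.rpow_lt_rpow (by norm_num) (by norm_num) (by positivity)
end
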